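/- (Data projection theorem, initial-data form.) Let u : ℝⁿ × ℝ → ℝᵐ be a C^{j+1} solution of u_t + Σ_{i=1}^n A_i(x) ∂u/∂x_i + A_0(x) u = 0, let τ : ℝⁿ → ℝ be C^{j+1}, let g(x) := u(x, τ(x)), and suppose I − A(x) is invertible for every x. Define the j-th order projection g_j(x) := Σ_{k=0}^{j} (τ(x)^k / k!) · (((I − A)⁻¹ D)ᵏ g)(x) (with sign convention so that the k-th term equals ((−τ(x))^k / k!) · ((−(I − A)⁻¹D)ᵏ g)(x)). Suppose ε > 0 and that for every x ∈ ℝⁿ and every s between 0 and τ(x), (|τ(x)|^{j+1}/(j+1)!) · ‖∂^{j+1}u/∂t^{j+1}(x, s)‖ < ε. Then ‖u(x, 0) − g_j(x)‖ < ε for every x ∈ ℝⁿ; i.e., u|_{t=0} = g_j + O(ε) uniformly in x. -/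

import Mathlib

open Matrix Set
open scoped Nat

section Helpers

variable {E : Type*} [NormedAddCommGroup E] [NormedSpace ℝ E]
variable {X : Type*} [NormedAddCommGroup X] [NormedSpace ℝ X]

lemma hasDerivAt_fixfst {w : X × ℝ → E} {x : X} {t : ℝ}
    (hw : DifferentiableAt ℝ w (x, t)) :
    HasDerivAt (fun s => w (x, s)) (fderiv ℝ w (x, t) (0, 1)) t := by
  have h1 : HasFDerivAt (fun s : ℝ => ((x, s) : X × ℝ))
      ((0 : ℝ →L[ℝ] X).prod (ContinuousLinearMap.id ℝ ℝ)) t :=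
    (hasFDerivAt_const x t).prodMk (hasFDerivAt_id t)
  have h2 := (hw.hasFDerivAt.comp t h1).hasDerivAt
  simpa [Function.comp_def] using h2

lemma fderiv_clm_apply_const {F G : Type*} [NormedAddCommGroup F] [NormedSpace ℝ F]
    [NormedAddCommGroup G] [NormedSpace ℝ G]
    {f : X → F →L[ℝ] G} {x : X} (hf : DifferentiableAt ℝ f x) (c : F) (v : X) :
    fderiv ℝ (fun y => f y c) x v = fderiv ℝ f x v c := by
  rw [fderiv_clm_apply hf (differentiableAt_const c)]
  simp

theorem taylor_bound_sharp {f : ℝ → E} {a b C x : ℝ} {n : ℕ} (hab : a ≤ b)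
    (hf : ContDiffOn ℝ (n + 1) f (Icc a b)) (hx : x ∈ Icc a b)
    (hC : ∀ y ∈ Icc a b, ‖iteratedDerivWithin (n + 1) f (Icc a b) y‖ ≤ C) :
    ‖f x - taylorWithinEval f n (Icc a b) a x‖ ≤ C * (x - a) ^ (n + 1) / ((n + 1)! : ℝ) := by
  rcases eq_or_lt_of_le hab with (rfl | h)
  · rw [Icc_self, mem_singleton_iff] at hx
    simp [hx]
  have hC0 : 0 ≤ C := (norm_nonneg _).trans (hC a (left_mem_Icc.2 hab))
  have hf' : DifferentiableOn ℝ (iteratedDerivWithin n f (Icc a b)) (Icc a b) :=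
    hf.differentiableOn_iteratedDerivWithin (mod_cast n.lt_succ_self) (uniqueDiffOn_Icc h)
  set G : ℝ → E := fun t => taylorWithinEval f n (Icc a b) t x - taylorWithinEval f n (Icc a b) a x
    with hG
  have hGcont : ContinuousOn G (Icc a x) :=
    ((continuousOn_taylorWithinEval (uniqueDiffOn_Icc h) hf.of_succ).mono
      (Icc_subset_Icc_right hx.2)).sub continuousOn_const
  have hGderiv : ∀ t ∈ Ico a x, HasDerivWithinAt G
      (((n ! : ℝ)⁻¹ * (x - t) ^ n) • iteratedDerivWithin (n + 1) f (Icc a b) t) (Ici t) t := by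
    intro t ht
    have htb : t ∈ Ico a b := ⟨ht.1, lt_of_lt_of_le ht.2 hx.2⟩
    have := hasDerivWithinAt_taylorWithinEval_at_Icc x h (Ico_subset_Icc_self htb)
      hf.of_succ hf'
    exact (this.mono_of_mem_nhdsWithin (Icc_mem_nhdsGE_of_mem htb)).sub_const _
  set B : ℝ → ℝ := fun t => C / (n + 1)! * ((x - a) ^ (n + 1) - (x - t) ^ (n + 1)) with hBdef
  have hB : ∀ t : ℝ, HasDerivAt B (C * (x - t) ^ n / n !) t := by
    intro t
    have h1 : HasDerivAt (fun s : ℝ => x - s) (-1) t := (hasDerivAt_id t).const_sub x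
    have h2 : HasDerivAt (fun s : ℝ => (x - s) ^ (n + 1))
        (((n : ℝ) + 1) * (x - t) ^ n * (-1)) t := by
      simpa using h1.fun_pow (n + 1)
    have h3 : HasDerivAt (fun y : ℝ => C / (n + 1)! * ((x - a) ^ (n + 1) - (x - y) ^ (n + 1)))
        (C / (n + 1)! * (0 - ((n : ℝ) + 1) * (x - t) ^ n * (-1))) t :=
      ((hasDerivAt_const t ((x - a) ^ (n + 1))).sub h2).const_mul (C / (n + 1)!)
    convert h3 using 1
    have : ((n + 1)! : ℝ) = ((n + 1) : ℝ) * n ! := by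
      rw [Nat.factorial_succ]; push_cast; ring
    rw [this]
    field_simp
    ring
  have hbound : ∀ t ∈ Ico a x,
      ‖((n ! : ℝ)⁻¹ * (x - t) ^ n) • iteratedDerivWithin (n + 1) f (Icc a b) t‖
        ≤ C * (x - t) ^ n / n ! := by
    intro t ht
    rw [norm_smul, Real.norm_eq_abs]
    have hxt : (0 : ℝ) ≤ x - t := sub_nonneg.2 ht.2.le
    have habs : |(n ! : ℝ)⁻¹ * (x - t) ^ n| = (n ! : ℝ)⁻¹ * (x - t) ^ n := by
      rw [abs_of_nonneg]
      positivity
    rw [habs]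
    have hCy : ‖iteratedDerivWithin (n + 1) f (Icc a b) t‖ ≤ C :=
      hC t ⟨ht.1, ht.2.le.trans hx.2⟩
    calc (n ! : ℝ)⁻¹ * (x - t) ^ n * ‖iteratedDerivWithin (n + 1) f (Icc a b) t‖
        ≤ (n ! : ℝ)⁻¹ * (x - t) ^ n * C := by
          apply mul_le_mul_of_nonneg_left hCy
          positivity
      _ = C * (x - t) ^ n / n ! := by ring
  have ha0 : ‖G a‖ ≤ B a := by simp [hG, hBdef]
  have key := image_norm_le_of_norm_deriv_right_le_deriv_boundary hGcont hGderiv ha0 hB hbound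
    (right_mem_Icc.2 hx.1)
  rw [hG] at key
  simp only [taylorWithinEval_self] at key
  calc ‖f x - taylorWithinEval f n (Icc a b) a x‖ ≤ B x := key
    _ = C * (x - a) ^ (n + 1) / ((n + 1)! : ℝ) := by
        simp only [hBdef]
        rw [sub_self, zero_pow (Nat.succ_ne_zero n), sub_zero]
        ring

lemma iteratedDerivWithin_eq_iteratedDeriv_of_differentiable {f : ℝ → E} {a b : ℝ} (hab : a < b)
    {K : ℕ} (hdiff : ∀ k < K, Differentiable ℝ (iteratedDeriv k f)) :
    ∀ k ≤ K, ∀ t ∈ Icc a b, iteratedDerivWithin k f (Icc a b) t = iteratedDeriv k f t := by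
  intro k
  induction k with
  | zero => intro _ t _; simp
  | succ k IH =>
    intro hk t ht
    rw [iteratedDerivWithin_succ,
      derivWithin_congr (fun s hs => IH (le_of_lt (Nat.lt_of_succ_le hk)) s hs)
        (IH (le_of_lt (Nat.lt_of_succ_le hk)) t ht),
      (hdiff k (Nat.lt_of_succ_le hk) t).derivWithin ((uniqueDiffOn_Icc hab) t ht),
      iteratedDeriv_succ]

end Helpers

/-- Matrix-vector multiplication, viewed as acting on the Euclidean space `ℝᵐ`. -/
noncomputable def mulVecE {m : ℕ} (M : Matrix (Fin m) (Fin m) ℝ)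
    (v : EuclideanSpace ℝ (Fin m)) : EuclideanSpace ℝ (Fin m) :=
  WithLp.toLp 2 (M *ᵥ v)

/-- The time derivative `∂w/∂t` of a function `w : ℝⁿ × ℝ → ℝᵐ`. -/
noncomputable def timeDeriv {n m : ℕ} (w : ((Fin n → ℝ) × ℝ) → EuclideanSpace ℝ (Fin m)) :
    ((Fin n → ℝ) × ℝ) → EuclideanSpace ℝ (Fin m) :=
  fun p => fderiv ℝ w p (0, 1)

/-- The first-order differential operator
`(D v)(x) = ∑ᵢ Aᵢ(x) ∂v/∂xᵢ(x) + A₀(x) v x` acting on functions of `x`. -/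
noncomputable def Dop {n m : ℕ}
    (A0 : (Fin n → ℝ) → Matrix (Fin m) (Fin m) ℝ)
    (A : Fin n → (Fin n → ℝ) → Matrix (Fin m) (Fin m) ℝ)
    (v : (Fin n → ℝ) → EuclideanSpace ℝ (Fin m)) :
    (Fin n → ℝ) → EuclideanSpace ℝ (Fin m) :=
  fun x => (∑ i, mulVecE (A i x) (fderiv ℝ v x (Pi.single i 1))) + mulVecE (A0 x) (v x)

section MulVecE

variable {m : ℕ}

lemma mulVecE_add (M : Matrix (Fin m) (Fin m) ℝ) (v w : EuclideanSpace ℝ (Fin m)) :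
    mulVecE M (v + w) = mulVecE M v + mulVecE M w :=
  congrArg (WithLp.toLp 2) (Matrix.mulVec_add M v w)

lemma mulVecE_smul (M : Matrix (Fin m) (Fin m) ℝ) (c : ℝ) (v : EuclideanSpace ℝ (Fin m)) :
    mulVecE M (c • v) = c • mulVecE M v :=
  congrArg (WithLp.toLp 2) (Matrix.mulVec_smul ..)

lemma mulVecE_neg (M : Matrix (Fin m) (Fin m) ℝ) (v : EuclideanSpace ℝ (Fin m)) :
    mulVecE M (-v) = -mulVecE M v :=
  congrArg (WithLp.toLp 2) (Matrix.mulVec_neg v M)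

lemma mulVecE_mulVecE (M N : Matrix (Fin m) (Fin m) ℝ) (v : EuclideanSpace ℝ (Fin m)) :
    mulVecE M (mulVecE N v) = mulVecE (M * N) v :=
  congrArg (WithLp.toLp 2) (Matrix.mulVec_mulVec v M N)

lemma one_mulVecE (v : EuclideanSpace ℝ (Fin m)) : mulVecE 1 v = v :=
  congrArg (WithLp.toLp 2) (Matrix.one_mulVec v)

lemma sub_mulVecE (M N : Matrix (Fin m) (Fin m) ℝ) (v : EuclideanSpace ℝ (Fin m)) :
    mulVecE (M - N) v = mulVecE M v - mulVecE N v :=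
  congrArg (WithLp.toLp 2) (Matrix.sub_mulVec M N v)

lemma add_mulVecE (M N : Matrix (Fin m) (Fin m) ℝ) (v : EuclideanSpace ℝ (Fin m)) :
    mulVecE (M + N) v = mulVecE M v + mulVecE N v :=
  congrArg (WithLp.toLp 2) (Matrix.add_mulVec M N v)

lemma smul_mulVecE (c : ℝ) (M : Matrix (Fin m) (Fin m) ℝ) (v : EuclideanSpace ℝ (Fin m)) :
    mulVecE (c • M) v = c • mulVecE M v :=
  congrArg (WithLp.toLp 2) (Matrix.smul_mulVec ..)

lemma zero_mulVecE (v : EuclideanSpace ℝ (Fin m)) : mulVecE (0 : Matrix (Fin m) (Fin m) ℝ) v = 0 :=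
  congrArg (WithLp.toLp 2) (Matrix.zero_mulVec v)

lemma sum_mulVecE {ι : Type*} (s : Finset ι) (M : ι → Matrix (Fin m) (Fin m) ℝ)
    (v : EuclideanSpace ℝ (Fin m)) :
    mulVecE (∑ i ∈ s, M i) v = ∑ i ∈ s, mulVecE (M i) v := by
  induction s using Finset.cons_induction with
  | empty => simpa using zero_mulVecE v
  | cons a s ha ih =>
    rw [Finset.sum_cons, Finset.sum_cons, add_mulVecE, ih]

noncomputable def mulVecCLM (M : Matrix (Fin m) (Fin m) ℝ) :
    EuclideanSpace ℝ (Fin m) →L[ℝ] EuclideanSpace ℝ (Fin m) :=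
  LinearMap.toContinuousLinearMap
    { toFun := mulVecE M
      map_add' := mulVecE_add M
      map_smul' := fun c v => mulVecE_smul M c v }

@[simp] lemma mulVecCLM_apply (M : Matrix (Fin m) (Fin m) ℝ) (v : EuclideanSpace ℝ (Fin m)) :
    mulVecCLM M v = mulVecE M v := rfl

lemma inv_mulVecE (M : Matrix (Fin m) (Fin m) ℝ) (hM : IsUnit M) (v : EuclideanSpace ℝ (Fin m)) :
    mulVecE M⁻¹ (mulVecE M v) = v := by
  rw [mulVecE_mulVecE, Matrix.nonsing_inv_mul M ((Matrix.isUnit_iff_isUnit_det M).mp hM),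
    one_mulVecE]

end MulVecE

/-- **data projection theorem, initial-data form.**
Let `u` be a `C^{j+1}` solution of `u_t + ∑ᵢ Aᵢ(x) u_{xᵢ} + A₀(x) u = 0`, `τ` a `C^{j+1}`
function, `g x = u (x, τ x)` the data on the non-characteristic manifold `Γ = {(x, τ x)}`
(`I - A(x)` invertible, `A(x) = ∑ᵢ ∂τ/∂xᵢ(x) • Aᵢ(x)`).  Define the `j`-th order
projection `g_j x = ∑_{k=0}^{j} (τ(x)^k/k!) ((I - A)⁻¹ D)^k g (x)`.  If `ε > 0` and for
every `x` and every `s` between `0` and `τ x` one has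
`(|τ x|^{j+1}/(j+1)!) ‖∂^{j+1}u/∂t^{j+1}(x, s)‖ < ε`, then `‖u (x, 0) - g_j x‖ < ε`
for every `x`, i.e. `u|_{t=0} = g_j + O(ε)` uniformly in `x`. -/
theorem data_projection_theorem
    {n m : ℕ} (j : ℕ)
    (A0 : (Fin n → ℝ) → Matrix (Fin m) (Fin m) ℝ)
    (A : Fin n → (Fin n → ℝ) → Matrix (Fin m) (Fin m) ℝ)
    (hA0 : ∀ a b, ContDiff ℝ (⊤ : ℕ∞) fun x => A0 x a b)
    (hA : ∀ i a b, ContDiff ℝ (⊤ : ℕ∞) fun x => A i x a b)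
    (u : ((Fin n → ℝ) × ℝ) → EuclideanSpace ℝ (Fin m))
    (hu : ContDiff ℝ ((j : ℕ∞) + 1) u)
    (τ : (Fin n → ℝ) → ℝ) (hτ : ContDiff ℝ ((j : ℕ∞) + 1) τ)
    (hsol : ∀ (x : Fin n → ℝ) (t : ℝ),
      fderiv ℝ u (x, t) (0, 1)
        + (∑ i, mulVecE (A i x) (fderiv ℝ u (x, t) (Pi.single i 1, 0)))
        + mulVecE (A0 x) (u (x, t)) = 0)
    (g : (Fin n → ℝ) → EuclideanSpace ℝ (Fin m)) (hg : ∀ x, g x = u (x, τ x))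
    (hinv : ∀ x : Fin n → ℝ,
      IsUnit ((1 : Matrix (Fin m) (Fin m) ℝ)
        - ∑ i, fderiv ℝ τ x (Pi.single i 1) • A i x))
    (ε : ℝ) (hε : 0 < ε)
    (hbound : ∀ x : Fin n → ℝ, ∀ s ∈ Set.uIcc (0 : ℝ) (τ x),
      (|τ x| ^ (j + 1) / (Nat.factorial (j + 1) : ℝ)) *
          ‖(timeDeriv^[j + 1] u) (x, s)‖ < ε) :
    ∀ x : Fin n → ℝ,
      ‖u (x, 0) - ∑ k ∈ Finset.range (j + 1),
          (τ x ^ k / (Nat.factorial k : ℝ)) •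
            ((fun (v : (Fin n → ℝ) → EuclideanSpace ℝ (Fin m)) x =>
                mulVecE (((1 : Matrix (Fin m) (Fin m) ℝ)
                    - ∑ i, fderiv ℝ τ x (Pi.single i 1) • A i x)⁻¹)
                  (Dop A0 A v x))^[k] g) x‖ < ε := by
  classical
  have hu' : ContDiff ℝ ((j + 1 : ℕ) : ℕ∞) u := by exact_mod_cast hu
  have hτ' : ContDiff ℝ ((j + 1 : ℕ) : ℕ∞) τ := by exact_mod_cast hτ
  -- smoothness of the iterated time derivatives
  have hw : ∀ k, k ≤ j + 1 → ContDiff ℝ ((j + 1 - k : ℕ) : ℕ∞) (timeDeriv^[k] u) := by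
    intro k
    induction k with
    | zero => intro _; simpa using hu'
    | succ k IH =>
      intro hk
      have hkj : k ≤ j := Nat.lt_succ_iff.mp hk
      have h1 : ContDiff ℝ ((j - k : ℕ) : ℕ∞) (fderiv ℝ (timeDeriv^[k] u)) := by
        apply (IH (le_trans (Nat.le_succ k) hk)).fderiv_right
        have he : (j + 1 - k : ℕ) = (j - k) + 1 := by omega
        rw [he]
        exact_mod_cast le_rfl
      have he : (j + 1 - (k + 1) : ℕ) = (j - k : ℕ) := by omega
      rw [he, Function.iterate_succ_apply']
      exact h1.clm_apply contDiff_const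
  have hwd : ∀ k, k ≤ j → Differentiable ℝ (timeDeriv^[k] u) := by
    intro k hk
    apply (hw k (by omega)).differentiable
    exact_mod_cast (by omega : j + 1 - k ≠ 0)
  -- the iterated time derivatives satisfy the same PDE
  have hpde : ∀ k, k ≤ j → ∀ (x : Fin n → ℝ) (t : ℝ),
      fderiv ℝ (timeDeriv^[k] u) (x, t) (0, 1)
        + (∑ i, mulVecE (A i x) (fderiv ℝ (timeDeriv^[k] u) (x, t) (Pi.single i 1, 0)))
        + mulVecE (A0 x) ((timeDeriv^[k] u) (x, t)) = 0 := by
    intro k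
    induction k with
    | zero => intro _ x t; exact hsol x t
    | succ k IH =>
      intro hk x t
      have hkj : k ≤ j := le_of_lt (Nat.lt_of_succ_le hk)
      have hk2 : 2 ≤ j + 1 - k := by omega
      -- w_k is at least C²
      have hwk2 : ContDiff ℝ ((j + 1 - k : ℕ) : ℕ∞) (timeDeriv^[k] u) := hw k (by omega)
      have hfd1 : ContDiff ℝ (1 : ℕ) (fderiv ℝ (timeDeriv^[k] u)) := by
        apply hwk2.fderiv_right
        have h2e : ((1:ℕ):WithTop ℕ∞) + 1 = ((2:ℕ) : WithTop ℕ∞) := by norm_num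
        rw [h2e]
        exact Nat.cast_le.mpr hk2
      have hdk : ∀ p, DifferentiableAt ℝ (fderiv ℝ (timeDeriv^[k] u)) p :=
        fun p => (hfd1.differentiable (by simp)).differentiableAt
      have hTD : Differentiable ℝ (timeDeriv (timeDeriv^[k] u)) := by
        have : ContDiff ℝ (1 : ℕ) (timeDeriv (timeDeriv^[k] u)) :=
          hfd1.clm_apply contDiff_const
        exact this.differentiable (by simp)
      -- derivative of each term of the PDE along the vertical line
      have h1 : HasDerivAt (fun s => fderiv ℝ (timeDeriv^[k] u) (x, s) (0, 1))
          (fderiv ℝ (timeDeriv (timeDeriv^[k] u)) (x, t) (0, 1)) t :=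
        hasDerivAt_fixfst (hTD (x, t))
      have h2 : ∀ i : Fin n, HasDerivAt
          (fun s => mulVecE (A i x) (fderiv ℝ (timeDeriv^[k] u) (x, s) (Pi.single i 1, 0)))
          (mulVecE (A i x)
            (fderiv ℝ (fderiv ℝ (timeDeriv^[k] u)) (x, t) (0, 1) (Pi.single i 1, 0))) t := by
        intro i
        have hdinner : DifferentiableAt ℝ
            (fun p => fderiv ℝ (timeDeriv^[k] u) p (Pi.single i 1, 0)) (x, t) := by
          have : ContDiff ℝ (1 : ℕ)
              (fun p => fderiv ℝ (timeDeriv^[k] u) p (Pi.single i 1, 0)) :=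
            hfd1.clm_apply contDiff_const
          exact (this.differentiable (by simp)).differentiableAt
        have hin : HasDerivAt (fun s => fderiv ℝ (timeDeriv^[k] u) (x, s) (Pi.single i 1, 0))
            (fderiv ℝ (fun p => fderiv ℝ (timeDeriv^[k] u) p (Pi.single i 1, 0)) (x, t) (0, 1))
            t := hasDerivAt_fixfst hdinner
        rw [fderiv_clm_apply_const (hdk (x, t))] at hin
        have := (mulVecCLM (A i x)).hasFDerivAt.comp_hasDerivAt t hin
        simpa [Function.comp_def] using this
      have h3 : HasDerivAt (fun s => mulVecE (A0 x) ((timeDeriv^[k] u) (x, s)))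
          (mulVecE (A0 x) (fderiv ℝ (timeDeriv^[k] u) (x, t) (0, 1))) t := by
        have hin : HasDerivAt (fun s => (timeDeriv^[k] u) (x, s))
            (fderiv ℝ (timeDeriv^[k] u) (x, t) (0, 1)) t :=
          hasDerivAt_fixfst ((hwd k hkj) (x, t))
        have := (mulVecCLM (A0 x)).hasFDerivAt.comp_hasDerivAt t hin
        simpa [Function.comp_def] using this
      have hsum : HasDerivAt (fun s =>
          fderiv ℝ (timeDeriv^[k] u) (x, s) (0, 1)
            + (∑ i, mulVecE (A i x) (fderiv ℝ (timeDeriv^[k] u) (x, s) (Pi.single i 1, 0)))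
            + mulVecE (A0 x) ((timeDeriv^[k] u) (x, s)))
          (fderiv ℝ (timeDeriv (timeDeriv^[k] u)) (x, t) (0, 1)
            + (∑ i, mulVecE (A i x)
                (fderiv ℝ (fderiv ℝ (timeDeriv^[k] u)) (x, t) (0, 1) (Pi.single i 1, 0)))
            + mulVecE (A0 x) (fderiv ℝ (timeDeriv^[k] u) (x, t) (0, 1))) t :=
        (h1.add (HasDerivAt.fun_sum (fun i _ => h2 i))).add h3
      have hzero : HasDerivAt (fun s =>
          fderiv ℝ (timeDeriv^[k] u) (x, s) (0, 1)
            + (∑ i, mulVecE (A i x) (fderiv ℝ (timeDeriv^[k] u) (x, s) (Pi.single i 1, 0)))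
            + mulVecE (A0 x) ((timeDeriv^[k] u) (x, s)))
          0 t := by
        have heq : (fun s =>
            fderiv ℝ (timeDeriv^[k] u) (x, s) (0, 1)
              + (∑ i, mulVecE (A i x) (fderiv ℝ (timeDeriv^[k] u) (x, s) (Pi.single i 1, 0)))
              + mulVecE (A0 x) ((timeDeriv^[k] u) (x, s)))
            = fun _ => (0 : EuclideanSpace ℝ (Fin m)) := funext fun s => IH hkj x s
        rw [heq]
        exact hasDerivAt_const t 0
      have hD := hsum.unique hzero
      -- symmetry of the second derivative
      have hsymm : ∀ v w : (Fin n → ℝ) × ℝ,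
          fderiv ℝ (fderiv ℝ (timeDeriv^[k] u)) (x, t) v w
            = fderiv ℝ (fderiv ℝ (timeDeriv^[k] u)) (x, t) w v := by
        have := (hwk2.contDiffAt (x := (x, t))).isSymmSndFDerivAt (by rw [minSmoothness_of_isRCLikeNormedField]; exact Nat.cast_le.mpr hk2)
        exact this
      have he1 : ∀ v, fderiv ℝ (timeDeriv (timeDeriv^[k] u)) (x, t) v
          = fderiv ℝ (fderiv ℝ (timeDeriv^[k] u)) (x, t) v (0, 1) :=
        fun v => fderiv_clm_apply_const (hdk (x, t)) (0, 1) v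
      rw [Function.iterate_succ_apply']
      calc fderiv ℝ (timeDeriv (timeDeriv^[k] u)) (x, t) (0, 1)
            + (∑ i, mulVecE (A i x)
                (fderiv ℝ (timeDeriv (timeDeriv^[k] u)) (x, t) (Pi.single i 1, 0)))
            + mulVecE (A0 x) ((timeDeriv (timeDeriv^[k] u)) (x, t))
          = fderiv ℝ (timeDeriv (timeDeriv^[k] u)) (x, t) (0, 1)
            + (∑ i, mulVecE (A i x)
                (fderiv ℝ (fderiv ℝ (timeDeriv^[k] u)) (x, t) (0, 1) (Pi.single i 1, 0)))
            + mulVecE (A0 x) (fderiv ℝ (timeDeriv^[k] u) (x, t) (0, 1)) := by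
            congr 2
            · refine Finset.sum_congr rfl fun i _ => ?_
              rw [he1 (Pi.single i 1, 0), hsymm]
        _ = 0 := hD
  -- τ is differentiable
  have hτd : Differentiable ℝ τ :=
    hτ'.differentiable (by exact_mod_cast (by omega : j + 1 ≠ 0))
  -- the key identity for the iterates of the projection operator
  have hQ : ∀ k, k ≤ j →
      ((fun (v : (Fin n → ℝ) → EuclideanSpace ℝ (Fin m)) x =>
          mulVecE (((1 : Matrix (Fin m) (Fin m) ℝ)
              - ∑ i, fderiv ℝ τ x (Pi.single i 1) • A i x)⁻¹)
            (Dop A0 A v x))^[k] g)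
        = fun y => ((-1 : ℝ)) ^ k • (timeDeriv^[k] u) (y, τ y) := by
    intro k
    induction k with
    | zero =>
      intro _
      funext y
      simp [hg y]
    | succ k IH =>
      intro hk
      have hkj : k ≤ j := le_of_lt (Nat.lt_of_succ_le hk)
      rw [Function.iterate_succ_apply', IH hkj]
      funext y
      show mulVecE (((1 : Matrix (Fin m) (Fin m) ℝ)
              - ∑ i, fderiv ℝ τ y (Pi.single i 1) • A i y)⁻¹)
          (Dop A0 A (fun z => ((-1 : ℝ)) ^ k • (timeDeriv^[k] u) (z, τ z)) y)
        = ((-1 : ℝ)) ^ (k + 1) • (timeDeriv^[k + 1] u) (y, τ y)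
      -- differentiability of the composite
      have hwdk : DifferentiableAt ℝ (timeDeriv^[k] u) (y, τ y) := (hwd k hkj) (y, τ y)
      have hφ : HasFDerivAt (fun z : Fin n → ℝ => (z, τ z))
          ((ContinuousLinearMap.id ℝ (Fin n → ℝ)).prod (fderiv ℝ τ y)) y :=
        (hasFDerivAt_id y).prodMk (hτd y).hasFDerivAt
      have hcomp : DifferentiableAt ℝ (fun z => (timeDeriv^[k] u) (z, τ z)) y :=
        (hwdk.hasFDerivAt.comp y hφ).differentiableAt
      -- chain rule
      have hfc : ∀ vv : Fin n → ℝ, fderiv ℝ (fun z => (timeDeriv^[k] u) (z, τ z)) y vv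
          = fderiv ℝ (timeDeriv^[k] u) (y, τ y) (vv, fderiv ℝ τ y vv) := by
        intro vv
        have h2 : HasFDerivAt (fun z => (timeDeriv^[k] u) (z, τ z))
            ((fderiv ℝ (timeDeriv^[k] u) (y, τ y)).comp
              ((ContinuousLinearMap.id ℝ (Fin n → ℝ)).prod (fderiv ℝ τ y))) y :=
          hwdk.hasFDerivAt.comp y hφ
        rw [h2.fderiv]
        simp
      have hfc' : ∀ i : Fin n, fderiv ℝ (fun z => (timeDeriv^[k] u) (z, τ z)) y (Pi.single i 1)
          = fderiv ℝ (timeDeriv^[k] u) (y, τ y) (Pi.single i 1, 0)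
            + fderiv ℝ τ y (Pi.single i 1) • fderiv ℝ (timeDeriv^[k] u) (y, τ y) (0, 1) := by
        intro i
        rw [hfc (Pi.single i 1)]
        have hsplit : ((Pi.single i 1 : Fin n → ℝ), fderiv ℝ τ y (Pi.single i 1))
            = ((Pi.single i 1 : Fin n → ℝ), (0 : ℝ))
              + (fderiv ℝ τ y (Pi.single i 1)) • ((0 : Fin n → ℝ), (1 : ℝ)) := by
          simp [Prod.ext_iff]
        rw [hsplit, map_add, _root_.map_smul]
      -- the operator acts on the constant multiple
      have hDsmul : Dop A0 A (fun z => ((-1 : ℝ)) ^ k • (timeDeriv^[k] u) (z, τ z)) y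
          = ((-1 : ℝ)) ^ k • Dop A0 A (fun z => (timeDeriv^[k] u) (z, τ z)) y := by
        show (∑ i, mulVecE (A i y)
              (fderiv ℝ (fun z => ((-1 : ℝ)) ^ k • (timeDeriv^[k] u) (z, τ z)) y (Pi.single i 1)))
            + mulVecE (A0 y) (((-1 : ℝ)) ^ k • (timeDeriv^[k] u) (y, τ y))
          = ((-1 : ℝ)) ^ k • ((∑ i, mulVecE (A i y)
              (fderiv ℝ (fun z => (timeDeriv^[k] u) (z, τ z)) y (Pi.single i 1)))
            + mulVecE (A0 y) ((timeDeriv^[k] u) (y, τ y)))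
        rw [fderiv_fun_const_smul hcomp]
        simp only [ContinuousLinearMap.smul_apply, mulVecE_smul, ← Finset.smul_sum, ← smul_add]
      -- the key PDE computation
      have hkey : Dop A0 A (fun z => (timeDeriv^[k] u) (z, τ z)) y
          = -(mulVecE ((1 : Matrix (Fin m) (Fin m) ℝ)
              - ∑ i, fderiv ℝ τ y (Pi.single i 1) • A i y)
            (fderiv ℝ (timeDeriv^[k] u) (y, τ y) (0, 1))) := by
        show (∑ i, mulVecE (A i y)
              (fderiv ℝ (fun z => (timeDeriv^[k] u) (z, τ z)) y (Pi.single i 1)))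
            + mulVecE (A0 y) ((timeDeriv^[k] u) (y, τ y)) = _
        have hp := hpde k hkj y (τ y)
        have hS : (∑ i, mulVecE (A i y)
              (fderiv ℝ (timeDeriv^[k] u) (y, τ y) (Pi.single i 1, 0)))
            + mulVecE (A0 y) ((timeDeriv^[k] u) (y, τ y))
            = -(fderiv ℝ (timeDeriv^[k] u) (y, τ y) (0, 1)) := by
          have hp' : fderiv ℝ (timeDeriv^[k] u) (y, τ y) (0, 1)
              + ((∑ i, mulVecE (A i y)
                  (fderiv ℝ (timeDeriv^[k] u) (y, τ y) (Pi.single i 1, 0)))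
                + mulVecE (A0 y) ((timeDeriv^[k] u) (y, τ y))) = 0 := by
            rw [← add_assoc]; exact hp
          exact (neg_eq_of_add_eq_zero_right hp').symm
        simp only [hfc', mulVecE_add, mulVecE_smul, Finset.sum_add_distrib]
        rw [sub_mulVecE, one_mulVecE, sum_mulVecE]
        simp only [smul_mulVecE]
        rw [add_right_comm, hS]
        abel
      have hwt : fderiv ℝ (timeDeriv^[k] u) (y, τ y) (0, 1) = (timeDeriv^[k + 1] u) (y, τ y) := by
        rw [Function.iterate_succ_apply']; rfl
      rw [hDsmul, hkey, mulVecE_smul, mulVecE_neg, inv_mulVecE _ (hinv y), hwt, pow_succ,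
        mul_smul, smul_neg]
      simp
  -- final assembly
  intro x
  have hsum_eq : ∑ k ∈ Finset.range (j + 1),
      (τ x ^ k / (Nat.factorial k : ℝ)) •
        ((fun (v : (Fin n → ℝ) → EuclideanSpace ℝ (Fin m)) x =>
            mulVecE (((1 : Matrix (Fin m) (Fin m) ℝ)
                - ∑ i, fderiv ℝ τ x (Pi.single i 1) • A i x)⁻¹)
              (Dop A0 A v x))^[k] g) x
      = ∑ k ∈ Finset.range (j + 1),
        ((k ! : ℝ)⁻¹ * ((0 : ℝ) - τ x) ^ k) • (timeDeriv^[k] u) (x, τ x) := by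
    refine Finset.sum_congr rfl fun k hk => ?_
    rw [hQ k (Nat.lt_succ_iff.mp (Finset.mem_range.mp hk))]
    show (τ x ^ k / (k ! : ℝ)) • ((-1 : ℝ) ^ k • (timeDeriv^[k] u) (x, τ x)) = _
    rw [smul_smul]
    congr 1
    rw [zero_sub, neg_pow]
    ring
  rw [hsum_eq]
  -- the global iterated derivatives of `t ↦ u (x, t)`
  have hiter : ∀ k ≤ j + 1, iteratedDeriv k (fun t => u (x, t))
      = fun t => (timeDeriv^[k] u) (x, t) := by
    intro k
    induction k with
    | zero => intro _; funext t; simp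
    | succ k IH =>
      intro hk
      funext t
      rw [iteratedDeriv_succ, IH (by omega)]
      rw [(hasDerivAt_fixfst ((hwd k (by omega)) (x, t))).deriv, Function.iterate_succ_apply']
      rfl
  have hdiffiter : ∀ k < j + 1, Differentiable ℝ (iteratedDeriv k (fun t => u (x, t))) := by
    intro k hk
    rw [hiter k (by omega)]
    exact (hwd k (by omega)).comp ((differentiable_const x).prodMk differentiable_id)
  have hcontw : Continuous fun s : ℝ => ‖(timeDeriv^[j + 1] u) (x, s)‖ := by
    have h0 : ContDiff ℝ ((0 : ℕ) : ℕ∞) (timeDeriv^[j + 1] u) := by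
      have := hw (j + 1) le_rfl
      simpa using this
    exact (h0.continuous.comp ((continuous_const (y := x)).prodMk continuous_id)).norm
  by_cases hc0 : τ x = 0
  · rw [hc0]
    rw [Finset.sum_eq_single_of_mem 0 (Finset.mem_range.mpr (by omega))
      (fun k _ hne => by simp [zero_pow hne])]
    simpa using hε
  rcases lt_or_gt_of_ne hc0 with hneg | hpos
  · -- τ x < 0 : expand around the left endpoint τ x
    have hfC : ContDiffOn ℝ ((j : ℕ) + 1) (fun t => u (x, t)) (Icc (τ x) 0) := by
      apply ContDiff.contDiffOn
      have := hu'.comp ((contDiff_const (c := x)).prodMk contDiff_id)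
      exact_mod_cast this
    have hW := iteratedDerivWithin_eq_iteratedDeriv_of_differentiable hneg hdiffiter
    obtain ⟨s₀, hs₀mem, hs₀max⟩ := (isCompact_Icc (a := τ x) (b := 0)).exists_isMaxOn
      ⟨τ x, left_mem_Icc.2 hneg.le⟩ hcontw.continuousOn
    have hCb : ∀ y ∈ Icc (τ x) 0,
        ‖iteratedDerivWithin (j + 1) (fun t => u (x, t)) (Icc (τ x) 0) y‖
          ≤ ‖(timeDeriv^[j + 1] u) (x, s₀)‖ := by
      intro y hy
      rw [hW (j + 1) le_rfl y hy, hiter (j + 1) le_rfl]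
      exact hs₀max hy
    have htaylor := taylor_bound_sharp hneg.le hfC (right_mem_Icc.2 hneg.le) hCb
    have hTE : taylorWithinEval (fun t => u (x, t)) j (Icc (τ x) 0) (τ x) 0
        = ∑ k ∈ Finset.range (j + 1),
          ((k ! : ℝ)⁻¹ * ((0 : ℝ) - τ x) ^ k) • (timeDeriv^[k] u) (x, τ x) := by
      rw [taylor_within_apply]
      refine Finset.sum_congr rfl fun k hk => ?_
      have hkle : k ≤ j + 1 := le_of_lt (Finset.mem_range.mp hk)
      rw [hW k hkle _ (left_mem_Icc.2 hneg.le), hiter k hkle]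
    rw [← hTE]
    have hb := hbound x s₀ (by rw [Set.uIcc_of_ge hneg.le]; exact hs₀mem)
    have hfin : ‖(timeDeriv^[j + 1] u) (x, s₀)‖ * (0 - τ x) ^ (j + 1) / ((j + 1)! : ℝ) < ε := by
      calc ‖(timeDeriv^[j + 1] u) (x, s₀)‖ * (0 - τ x) ^ (j + 1) / ((j + 1)! : ℝ)
          = |τ x| ^ (j + 1) / ((j + 1)! : ℝ) * ‖(timeDeriv^[j + 1] u) (x, s₀)‖ := by
            rw [zero_sub, ← abs_of_neg hneg]; ring
        _ < ε := hb
    exact lt_of_le_of_lt htaylor hfin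
  · -- τ x > 0 : expand the reflected function around the left endpoint 0
    set F : ℝ → EuclideanSpace ℝ (Fin m) := fun t => u (x, τ x - t) with hF
    have hFC : ContDiffOn ℝ ((j : ℕ) + 1) F (Icc 0 (τ x)) := by
      apply ContDiff.contDiffOn
      have := hu'.comp ((contDiff_const (c := x)).prodMk
        ((contDiff_const (c := τ x)).sub contDiff_id))
      exact_mod_cast this
    have hiterF : ∀ k ≤ j + 1, ∀ t : ℝ,
        iteratedDeriv k F t = (-1 : ℝ) ^ k • (timeDeriv^[k] u) (x, τ x - t) := by
      intro k hk t
      have h2 : iteratedDeriv k F t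
          = (-1 : ℝ) ^ k • iteratedDeriv k (fun z => u (x, τ x + z)) (-t) := by
        have h3 := iteratedDeriv_comp_neg k (fun z => u (x, τ x + z)) t
        rw [show F = (fun s => u (x, τ x + -s)) from funext fun s => by show u (x, τ x - s) = u (x, τ x + -s); rw [sub_eq_add_neg]]
        exact h3
      have h1 : iteratedDeriv k (fun z => u (x, τ x + z)) (-t)
          = iteratedDeriv k (fun t => u (x, t)) (τ x + -t) :=
        congrFun (iteratedDeriv_comp_const_add k (fun t => u (x, t)) (τ x)) (-t)
      rw [h2, h1, hiter k hk]
      simp [sub_eq_add_neg]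
    have hdiffF : ∀ k < j + 1, Differentiable ℝ (iteratedDeriv k F) := by
      intro k hk
      rw [funext (hiterF k (le_of_lt hk))]
      exact ((hwd k (by omega)).comp ((differentiable_const x).prodMk
        ((differentiable_const (τ x)).sub differentiable_id))).const_smul ((-1 : ℝ) ^ k)
    have hWF := iteratedDerivWithin_eq_iteratedDeriv_of_differentiable hpos hdiffF
    obtain ⟨s₀, hs₀mem, hs₀max⟩ := (isCompact_Icc (a := 0) (b := τ x)).exists_isMaxOn
      ⟨0, left_mem_Icc.2 hpos.le⟩ hcontw.continuousOn
    have hCb : ∀ y ∈ Icc 0 (τ x),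
        ‖iteratedDerivWithin (j + 1) F (Icc 0 (τ x)) y‖
          ≤ ‖(timeDeriv^[j + 1] u) (x, s₀)‖ := by
      intro y hy
      rw [hWF (j + 1) le_rfl y hy, hiterF (j + 1) le_rfl y]
      calc ‖(-1 : ℝ) ^ (j + 1) • (timeDeriv^[j + 1] u) (x, τ x - y)‖
          = ‖(timeDeriv^[j + 1] u) (x, τ x - y)‖ := by rw [norm_smul]; simp
        _ ≤ ‖(timeDeriv^[j + 1] u) (x, s₀)‖ :=
            hs₀max ⟨by linarith [hy.2], by linarith [hy.1]⟩
    have htaylor := taylor_bound_sharp hpos.le hFC (right_mem_Icc.2 hpos.le) hCb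
    have hTE : taylorWithinEval F j (Icc 0 (τ x)) 0 (τ x)
        = ∑ k ∈ Finset.range (j + 1),
          ((k ! : ℝ)⁻¹ * ((0 : ℝ) - τ x) ^ k) • (timeDeriv^[k] u) (x, τ x) := by
      rw [taylor_within_apply]
      refine Finset.sum_congr rfl fun k hk => ?_
      have hkle : k ≤ j + 1 := le_of_lt (Finset.mem_range.mp hk)
      rw [hWF k hkle 0 (left_mem_Icc.2 hpos.le), hiterF k hkle 0, smul_smul, sub_zero]
      congr 1
      rw [zero_sub, neg_pow]
      ring
    have hF0 : F (τ x) = u (x, 0) := by show u (x, τ x - τ x) = u (x, 0); rw [sub_self]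
    rw [← hTE, ← hF0]
    have hb := hbound x s₀ (by rw [Set.uIcc_of_le hpos.le]; exact hs₀mem)
    have hfin : ‖(timeDeriv^[j + 1] u) (x, s₀)‖ * (τ x - 0) ^ (j + 1) / ((j + 1)! : ℝ) < ε := by
      calc ‖(timeDeriv^[j + 1] u) (x, s₀)‖ * (τ x - 0) ^ (j + 1) / ((j + 1)! : ℝ)
          = |τ x| ^ (j + 1) / ((j + 1)! : ℝ) * ‖(timeDeriv^[j + 1] u) (x, s₀)‖ := by
            rw [sub_zero, abs_of_pos hpos]; ring
        _ < ε := hb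
    exact lt_of_le_of_lt htaylor hfin
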